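/- arXiv:1505.07547 — 2 statements merged into one kernel-verified Lean document; each statement's English description precedes it below -/
import Mathlib

section
/- Let F be a field, let S ⊆ F be a finite set, let s be a positive integer, and let P ∈ F[X_1,...,X_m] be a nonzero polynomial of total degree at most d. Then the number of points a ∈ S^m at which P vanishes with multiplicity at least s satisfies s·#{a ∈ S^m : mult(P,a) ≥ s} ≤ d·|S|^{m-1}. -/
/-!
`mult(P, a)` is the order (least total degree of a monomial) of the Taylor shift `P(a + X)`, and
one proves the stronger bound `∑_{a ∈ S^m} mult(P, a) ≤ deg P · |S|^(m-1)` by induction on `m`.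
Expand `P` in its first variable `Y`, with leading coefficient `L(X')` of degree `t` in `Y`. For a
fixed `a'`, choose a monomial `X'^e` of minimal degree `w = mult(L, a')` in `L(a' + X')`, and let
`g ∈ F[Y]` collect the coefficients of `X'^e` in `P(Y, a' + X')`. Then `g ≠ 0` has degree at most
`t`, and the monomial `Y^j X'^e` with `j = mult(g, b)` occurs in `P(b + Y, a' + X')`, so
`mult(P, (b, a')) ≤ w + mult(g, b)`. Summing over `b ∈ S` gives at most `|S| · w + t`; the induction
hypothesis for `L` and `deg L + t ≤ deg P` finish the induction. The count of points of
multiplicity `≥ s` is then bounded by Markov's inequality.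
-/

/-- The Hasse derivative of a multivariate polynomial `P` with respect to the index
vector `i : Fin m → ℕ`: the coefficient of `Z^i` in `P(X + Z)`. -/
noncomputable def mvHasseDeriv {F : Type*} [CommSemiring F] {m : ℕ}
    (i : Fin m → ℕ) (P : MvPolynomial (Fin m) F) : MvPolynomial (Fin m) F :=
  MvPolynomial.coeff (Finsupp.equivFunOnFinite.symm i)
    (MvPolynomial.eval₂ (MvPolynomial.C.comp MvPolynomial.C)
      (fun k => MvPolynomial.C (MvPolynomial.X k) + MvPolynomial.X k) P)

/-- The multiplicity of `P` at a point `a`: the largest `M` (possibly `⊤`) such that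
all Hasse derivatives of `P` of weight `< M` vanish at `a`. -/
noncomputable def mvMult {F : Type*} [CommSemiring F] {m : ℕ}
    (P : MvPolynomial (Fin m) F) (a : Fin m → F) : ℕ∞ :=
  sSup {M : ℕ∞ | ∀ i : Fin m → ℕ, ((∑ k, i k : ℕ) : ℕ∞) < M →
    MvPolynomial.eval a (mvHasseDeriv i P) = 0}


open MvPolynomial

namespace MvPolynomial

section taylor

variable {R σ : Type*} [CommSemiring R]

noncomputable def taylor (a : σ → R) : MvPolynomial σ R →ₐ[R] MvPolynomial σ R :=
  aeval fun k => C (a k) + X k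

@[simp] lemma taylor_X (a : σ → R) (k : σ) : taylor a (X k) = C (a k) + X k :=
  aeval_X _ _

@[simp] lemma taylor_C (a : σ → R) (c : R) : taylor a (C c) = C c :=
  (taylor a).commutes c

lemma taylor_taylor (a c : σ → R) (P : MvPolynomial σ R) :
    taylor a (taylor c P) = taylor (a + c) P := by
  change ((taylor a).comp (taylor c)) P = _
  congr 1
  refine algHom_ext fun k => ?_
  simp only [AlgHom.comp_apply, taylor_X, map_add, taylor_C, Pi.add_apply]
  ring

lemma taylor_zero (P : MvPolynomial σ R) : taylor 0 P = P := by
  change taylor 0 P = AlgHom.id R _ P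
  congr 1
  exact algHom_ext fun k => by simp

end taylor

lemma taylor_injective {R σ : Type*} [CommRing R] (a : σ → R) :
    Function.Injective (taylor a) :=
  Function.LeftInverse.injective (g := taylor (-a)) fun P => by
    rw [taylor_taylor, neg_add_cancel, taylor_zero]

lemma finSuccEquiv_taylor_cons {R : Type*} [CommSemiring R] {n : ℕ} (b : R)
    (a : Fin n → R) (P : MvPolynomial (Fin (n + 1)) R) :
    finSuccEquiv R n (taylor (Fin.cons b a) P)
      = Polynomial.taylor (C b) ((finSuccEquiv R n P).map (taylor a).toRingHom) := by
  have key : (finSuccEquiv R n).toRingHom.comp (taylor (Fin.cons b a)).toRingHom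
      = (Polynomial.taylorAlgHom (C b)).toRingHom.comp
          ((Polynomial.mapRingHom (taylor a).toRingHom).comp (finSuccEquiv R n).toRingHom) := by
    refine ringHom_ext (fun c => ?_) (Fin.cases ?_ fun i => ?_)
    · simp [finSuccEquiv_apply]
    · simp [finSuccEquiv_apply, add_comm]
    · simp [finSuccEquiv_apply]
  simpa using RingHom.congr_fun key P

end MvPolynomial

namespace Polynomial

section coeffSlice

variable {R σ : Type*} [CommSemiring R]

noncomputable def coeffSlice (e : σ →₀ ℕ) (p : (MvPolynomial σ R)[X]) : R[X] :=
  ∑ k ∈ p.support, monomial k (MvPolynomial.coeff e (p.coeff k))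

@[simp] lemma coeff_coeffSlice (e : σ →₀ ℕ) (p : (MvPolynomial σ R)[X]) (k : ℕ) :
    (coeffSlice e p).coeff k = MvPolynomial.coeff e (p.coeff k) := by
  simp only [coeffSlice, finsetSum_coeff, coeff_monomial, Finset.sum_ite_eq']
  split_ifs with h
  · rfl
  · rw [notMem_support_iff.mp h, MvPolynomial.coeff_zero]

lemma coeffSlice_add (e : σ →₀ ℕ) (p q : (MvPolynomial σ R)[X]) :
    coeffSlice e (p + q) = coeffSlice e p + coeffSlice e q := by
  ext k; simp

lemma coeffSlice_monomial (e : σ →₀ ℕ) (k : ℕ) (c : MvPolynomial σ R) :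
    coeffSlice e (monomial k c) = monomial k (MvPolynomial.coeff e c) := by
  ext j; simp only [coeff_coeffSlice, coeff_monomial]; split_ifs <;> simp

lemma coeffSlice_taylor (e : σ →₀ ℕ) (b : R) (p : (MvPolynomial σ R)[X]) :
    coeffSlice e (taylor (MvPolynomial.C b) p) = taylor b (coeffSlice e p) := by
  induction p using Polynomial.induction_on' with
  | add p q hp hq => rw [map_add, coeffSlice_add, coeffSlice_add, hp, hq, map_add]
  | monomial k c =>
    ext j
    rw [taylor_monomial, coeffSlice_monomial, taylor_monomial, coeff_coeffSlice, coeff_C_mul,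
      coeff_C_mul, coeff_X_add_C_pow, coeff_X_add_C_pow, ← MvPolynomial.C_pow,
      ← map_natCast MvPolynomial.C, ← MvPolynomial.C_mul, mul_comm c, MvPolynomial.coeff_C_mul,
      mul_comm]

lemma natDegree_coeffSlice_le (e : σ →₀ ℕ) (p : (MvPolynomial σ R)[X]) :
    (coeffSlice e p).natDegree ≤ p.natDegree :=
  natDegree_le_iff_coeff_eq_zero.mpr fun k hk => by
    rw [coeff_coeffSlice, coeff_eq_zero_of_natDegree_lt hk, MvPolynomial.coeff_zero]

lemma coeffSlice_ne_zero {e : σ →₀ ℕ} {p : (MvPolynomial σ R)[X]}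
    (he : MvPolynomial.coeff e p.leadingCoeff ≠ 0) : coeffSlice e p ≠ 0 :=
  fun h => he (by rw [leadingCoeff, ← coeff_coeffSlice, h, coeff_zero])

end coeffSlice

lemma coeff_taylor_rootMultiplicity_ne_zero {R : Type*} [CommRing R] {p : R[X]} (hp : p ≠ 0)
    (b : R) : (taylor b p).coeff (p.rootMultiplicity b) ≠ 0 := by
  rw [rootMultiplicity_eq_natTrailingDegree, ← taylor_apply, ← trailingCoeff, ne_eq,
    trailingCoeff_eq_zero, taylor_eq_zero]
  exact hp

lemma sum_rootMultiplicity_le_natDegree {R : Type*} [CommRing R] [IsDomain R]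
    (p : R[X]) (S : Finset R) : ∑ b ∈ S, p.rootMultiplicity b ≤ p.natDegree := by
  classical
  calc ∑ b ∈ S, p.rootMultiplicity b = ∑ b ∈ S, p.roots.count b := by simp only [count_roots]
    _ ≤ ∑ b ∈ S ∪ p.roots.toFinset, p.roots.count b :=
      Finset.sum_le_sum_of_subset Finset.subset_union_left
    _ = Multiset.card p.roots :=
      Multiset.sum_count_eq_card fun b hb => Finset.mem_union_right _ (Multiset.mem_toFinset.mpr hb)
    _ ≤ p.natDegree := card_roots' p

end Polynomial

lemma Finset.sum_piFinset_const_succ {α M : Type*} [AddCommMonoid M] (S : Finset α) {n : ℕ}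
    (f : (Fin (n + 1) → α) → M) :
    ∑ a ∈ Fintype.piFinset (fun _ : Fin (n + 1) => S), f a
      = ∑ a ∈ Fintype.piFinset (fun _ : Fin n => S), ∑ b ∈ S, f (Fin.cons b a) := by
  have h := Finset.filter_piFinset_eq_map_consEquiv (fun _ : Fin (n + 1) => S) fun _ => True
  simp only [Finset.filter_true] at h
  rw [h, Finset.sum_map, Finset.sum_product, Finset.sum_comm]
  rfl

namespace MvPolynomial

lemma order_le_of_coeff_finSuccEquiv_ne_zero {R : Type*} [CommSemiring R] {n : ℕ}
    {P : MvPolynomial (Fin (n + 1)) R} {j : ℕ} {e : Fin n →₀ ℕ}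
    (h : coeff e ((finSuccEquiv R n P).coeff j) ≠ 0) :
    (P : MvPowerSeries (Fin (n + 1)) R).order ≤ (j + e.degree : ℕ) := by
  rw [finSuccEquiv_coeff_coeff, ← coeff_coe] at h
  simpa [Finsupp.degree_eq_sum, Fin.sum_univ_succ] using MvPowerSeries.order_le h

lemma order_taylor_cons_le {R : Type*} [CommRing R] {n : ℕ} (P : MvPolynomial (Fin (n + 1)) R)
    (b : R) (a : Fin n → R) {e : Fin n →₀ ℕ}
    (he : coeff e ((finSuccEquiv R n P).map (taylor a).toRingHom).leadingCoeff ≠ 0) :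
    (taylor (Fin.cons b a) P : MvPowerSeries (Fin (n + 1)) R).order ≤
      (((finSuccEquiv R n P).map (taylor a).toRingHom).coeffSlice e).rootMultiplicity b
        + e.degree := by
  apply order_le_of_coeff_finSuccEquiv_ne_zero
  rw [finSuccEquiv_taylor_cons, ← Polynomial.coeff_coeffSlice, Polynomial.coeffSlice_taylor]
  exact Polynomial.coeff_taylor_rootMultiplicity_ne_zero (Polynomial.coeffSlice_ne_zero he) b

variable {R : Type*} [CommRing R] [IsDomain R]

lemma sum_order_taylor_cons_le {n : ℕ} {P : MvPolynomial (Fin (n + 1)) R} (hP : P ≠ 0)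
    (a : Fin n → R) (S : Finset R) :
    ∑ b ∈ S, (taylor (Fin.cons b a) P : MvPowerSeries (Fin (n + 1)) R).order ≤
      S.card * (taylor a (finSuccEquiv R n P).leadingCoeff : MvPowerSeries (Fin n) R).order
        + (finSuccEquiv R n P).natDegree := by
  set Q := (finSuccEquiv R n P).map (taylor a).toRingHom
  have hinj : Function.Injective (taylor a).toRingHom := taylor_injective a
  have hL : (taylor a (finSuccEquiv R n P).leadingCoeff : MvPowerSeries (Fin n) R) ≠ 0 := by
    simpa [coe_eq_zero_iff, map_eq_zero_iff _ (taylor_injective a)] using hP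
  obtain ⟨e, he, he_deg⟩ :=
    MvPowerSeries.exists_coeff_ne_zero_and_order (MvPowerSeries.ne_zero_iff_order_finite.mp hL)
  have hQ : Q.leadingCoeff = taylor a (finSuccEquiv R n P).leadingCoeff :=
    Polynomial.leadingCoeff_map_of_injective hinj _
  rw [coeff_coe, ← hQ] at he
  calc ∑ b ∈ S, (taylor (Fin.cons b a) P : MvPowerSeries (Fin (n + 1)) R).order
      ≤ ∑ b ∈ S, (((Q.coeffSlice e).rootMultiplicity b : ℕ∞) + e.degree) :=
        Finset.sum_le_sum fun b _ => order_taylor_cons_le P b a he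
    _ = (∑ b ∈ S, (Q.coeffSlice e).rootMultiplicity b : ℕ) + S.card * e.degree := by
        push_cast
        rw [Finset.sum_add_distrib, Finset.sum_const, nsmul_eq_mul]
    _ ≤ S.card * e.degree + (finSuccEquiv R n P).natDegree := by
        rw [add_comm]
        gcongr
        calc _ ≤ (Q.coeffSlice e).natDegree := Polynomial.sum_rootMultiplicity_le_natDegree _ S
          _ ≤ Q.natDegree := Polynomial.natDegree_coeffSlice_le e Q
          _ = _ := Polynomial.natDegree_map_eq_of_injective hinj _
    _ = _ := by rw [he_deg]

theorem sum_order_taylor_le {m : ℕ} {P : MvPolynomial (Fin m) R} (hP : P ≠ 0) (S : Finset R) :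
    ∑ a ∈ Fintype.piFinset (fun _ => S), (taylor a P : MvPowerSeries (Fin m) R).order
      ≤ P.totalDegree * S.card ^ (m - 1) := by
  induction m with
  | zero =>
    suffices h : ∀ a : Fin 0 → R, (taylor a P : MvPowerSeries (Fin 0) R).order = 0 by simp [h]
    intro a
    obtain ⟨d, hd⟩ := exists_coeff_ne_zero ((map_ne_zero_iff _ (taylor_injective a)).mpr hP)
    rw [← coeff_coe] at hd
    simpa [Subsingleton.elim d 0] using MvPowerSeries.order_le hd
  | succ m ih =>
    set Q := finSuccEquiv R m P
    have hL : Q.leadingCoeff ≠ 0 := by simpa [Q] using hP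
    have hdeg : Q.leadingCoeff.totalDegree + Q.natDegree ≤ P.totalDegree :=
      totalDegree_coeff_finSuccEquiv_add_le P _ hL
    have hpow : S.card * (Q.leadingCoeff.totalDegree * S.card ^ (m - 1))
        ≤ Q.leadingCoeff.totalDegree * S.card ^ m := by
      rcases m with _ | m
      · simp [(isHomogeneous_of_isEmpty _ _ Q.leadingCoeff).totalDegree hL]
      · rw [Nat.add_sub_cancel, pow_succ]
        exact le_of_eq (by ring)
    calc ∑ a ∈ Fintype.piFinset (fun _ => S), (taylor a P : MvPowerSeries (Fin (m + 1)) R).order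
        = ∑ a ∈ Fintype.piFinset (fun _ => S), ∑ b ∈ S,
            (taylor (Fin.cons b a) P : MvPowerSeries (Fin (m + 1)) R).order :=
          Finset.sum_piFinset_const_succ S _
      _ ≤ ∑ a ∈ Fintype.piFinset (fun _ => S),
            (S.card * (taylor a Q.leadingCoeff : MvPowerSeries (Fin m) R).order + Q.natDegree) :=
          Finset.sum_le_sum fun a _ => sum_order_taylor_cons_le hP a S
      _ ≤ S.card * (Q.leadingCoeff.totalDegree * S.card ^ (m - 1)) + S.card ^ m * Q.natDegree := by
          rw [Finset.sum_add_distrib, ← Finset.mul_sum, Finset.sum_const,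
            Fintype.card_piFinset_const, nsmul_eq_mul]
          push_cast
          gcongr
          exact ih hL
      _ ≤ (Q.leadingCoeff.totalDegree + Q.natDegree) * S.card ^ m := by
          rw [add_mul, mul_comm (_ ^ m : ℕ∞)]
          exact add_le_add_left (by exact_mod_cast hpow) _
      _ ≤ P.totalDegree * S.card ^ (m + 1 - 1) := by
          rw [Nat.add_sub_cancel]
          gcongr
          exact_mod_cast hdeg

end MvPolynomial

lemma eval_mvHasseDeriv {F : Type*} [CommSemiring F] {m : ℕ} (a : Fin m → F)
    (i : Fin m → ℕ) (P : MvPolynomial (Fin m) F) :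
    eval a (mvHasseDeriv i P) = coeff (Finsupp.equivFunOnFinite.symm i) (taylor a P) := by
  rw [mvHasseDeriv, ← coeff_map, eval₂_comp_left (map (eval a))]
  congr 2
  · ext c; simp
  · funext k; simp

lemma mvMult_eq_order {F : Type*} [CommSemiring F] {m : ℕ} (P : MvPolynomial (Fin m) F)
    (a : Fin m → F) : mvMult P a = (taylor a P : MvPowerSeries (Fin m) F).order := by
  rw [mvMult, ← csSup_Iic (a := MvPowerSeries.order (taylor a P : MvPowerSeries (Fin m) F))]
  congr 1
  ext M
  refine ⟨fun h => MvPowerSeries.le_order fun d hd => ?_, fun h i hi => ?_⟩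
  · rw [coeff_coe, ← Finsupp.equivFunOnFinite_symm_coe d, ← eval_mvHasseDeriv]
    exact h d (by rwa [← Finsupp.degree_eq_sum])
  · rw [eval_mvHasseDeriv, ← coeff_coe]
    refine MvPowerSeries.coeff_of_lt_order (lt_of_lt_of_le ?_ h)
    simpa [Finsupp.degree_eq_sum] using hi

theorem sum_mvMult_le {F : Type*} [CommRing F] [IsDomain F] {m : ℕ}
    {P : MvPolynomial (Fin m) F} (hP : P ≠ 0) (S : Finset F) :
    ∑ a ∈ Fintype.piFinset (fun _ => S), mvMult P a ≤ P.totalDegree * S.card ^ (m - 1) := by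
  simpa only [mvMult_eq_order] using sum_order_taylor_le hP S

theorem mult_schwartz_zippel_count_general {F : Type*} [Field F] {m : ℕ} (S : Finset F) (d s : ℕ)
    (P : MvPolynomial (Fin m) F) (hP : P ≠ 0) (hdeg : P.totalDegree ≤ d) :
    s * Nat.card {a : Fin m → F // (∀ k, a k ∈ S) ∧ (s : ℕ∞) ≤ mvMult P a}
      ≤ d * S.card ^ (m - 1) := by
  classical
  set A := {a ∈ Fintype.piFinset (fun _ : Fin m => S) | (s : ℕ∞) ≤ mvMult P a}
  have hA : Nat.card {a : Fin m → F // (∀ k, a k ∈ S) ∧ (s : ℕ∞) ≤ mvMult P a} = A.card := by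
    rw [← Nat.card_eq_finsetCard]
    exact Nat.card_congr (Equiv.subtypeEquivRight fun a => by simp [A, Fintype.mem_piFinset])
  suffices (s * A.card : ℕ∞) ≤ d * S.card ^ (m - 1) by rw [hA]; exact_mod_cast this
  calc (s * A.card : ℕ∞) = ∑ _a ∈ A, (s : ℕ∞) := by rw [Finset.sum_const, nsmul_eq_mul, mul_comm]
    _ ≤ ∑ a ∈ A, mvMult P a := Finset.sum_le_sum fun a ha => (Finset.mem_filter.mp ha).2
    _ ≤ ∑ a ∈ Fintype.piFinset (fun _ => S), mvMult P a :=
        Finset.sum_le_sum_of_subset (Finset.filter_subset _ _)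
    _ ≤ P.totalDegree * S.card ^ (m - 1) := sum_mvMult_le hP S
    _ ≤ d * S.card ^ (m - 1) := by gcongr

/-- **Multiplicity Schwartz–Zippel (counting form).**
If `P` is a nonzero polynomial of total degree at most `d` in `m` variables over a field `F`,
`S ⊆ F` is finite and `s > 0`, then `s ⬝ #{a ∈ S^m : mult(P,a) ≥ s} ≤ d ⬝ |S|^(m-1)`. -/
theorem mult_schwartz_zippel_count {F : Type*} [Field F] {m : ℕ} (S : Finset F) (d s : ℕ)
    (hs : 0 < s) (P : MvPolynomial (Fin m) F) (hP : P ≠ 0) (hdeg : P.totalDegree ≤ d) :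
    s * Nat.card {a : Fin m → F // (∀ k, a k ∈ S) ∧ (s : ℕ∞) ≤ mvMult P a}
      ≤ d * S.card ^ (m - 1) :=
  mult_schwartz_zippel_count_general S d s P hP hdeg
end

section
/- Let F be a field, let P ∈ F[X_1,...,X_m], let a ∈ F^m, and let j' be a nonnegative integer. Define the polynomial R(X) = Σ_{i' : wt(i') = j'} P^{(i')}(a)·X^{i'} ∈ F[X_1,...,X_m]. Then for every vector l of nonnegative integers, the l-th Hasse derivative of R satisfies R^{(l)}(X) = Σ_{i : wt(i) = j' − wt(l)} binom(l+i, l) · P^{(l+i)}(a) · X^i (the empty sum, i.e. 0, when wt(l) > j'). In particular, R^{(l)}(b) = Σ_{i : wt(i) = j' − wt(l)} binom(l+i, l) · P^{(l+i)}(a) · b^i for every b ∈ F^m. -/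
/-!
The Hasse derivative is additive, and on a monomial it is explicit: expanding
`∏ₖ (Xₖ + Zₖ)^{nₖ}` binomially, the coefficient of `Z^l` is `binom(n, l) X^{n-l}` when `l ≤ n`
and `0` otherwise. Applied termwise to `R`, only the tuples `i' = l + i` survive, and `l + i` has
weight `j'` exactly when `i` has weight `j' - wt(l)`. Evaluating at `b` then gives the second part.
-/

open MvPolynomial Finset

section MvPolynomial

variable {R : Type*} [CommSemiring R] {σ : Type*}

theorem MvPolynomial.monomial_equivFunOnFinite_symm_one [Fintype σ] (t : σ → ℕ) :
    monomial (Finsupp.equivFunOnFinite.symm t) (1 : R) = ∏ k, X k ^ t k := by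
  rw [monomial_eq, C_1, one_mul, Finsupp.prod_fintype _ _ fun k => pow_zero _]
  rfl

theorem MvPolynomial.coeff_prod_C_mul_X_pow [Fintype σ] [DecidableEq σ] (c : σ → R)
    (t l : σ → ℕ) :
    coeff (Finsupp.equivFunOnFinite.symm l) (∏ k, C (c k) * X k ^ t k) =
      if t = l then ∏ k, c k else 0 := by
  rw [prod_mul_distrib, ← map_prod, coeff_C_mul, ← monomial_equivFunOnFinite_symm_one,
    coeff_monomial]
  simp only [EmbeddingLike.apply_eq_iff_eq, mul_ite, mul_one, mul_zero]

theorem MvPolynomial.C_add_X_pow (x : R) (k : σ) (n : ℕ) :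
    (C x + X k : MvPolynomial σ R) ^ n =
      ∑ j ∈ range (n + 1), C (x ^ (n - j) * n.choose j) * X k ^ j := by
  rw [add_comm, add_pow]
  refine sum_congr rfl fun j _ => ?_
  rw [map_mul, map_pow, map_natCast]
  ring

end MvPolynomial

section HasseDeriv

variable {F : Type*} [CommSemiring F] {m : ℕ}

theorem mvHasseDeriv_sum {ι : Type*} (l : Fin m → ℕ) (s : Finset ι)
    (f : ι → MvPolynomial (Fin m) F) :
    mvHasseDeriv l (∑ x ∈ s, f x) = ∑ x ∈ s, mvHasseDeriv l (f x) := by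
  simp only [mvHasseDeriv, eval₂_sum, coeff_sum]

theorem mvHasseDeriv_monomial (l n : Fin m → ℕ) (c : F) :
    mvHasseDeriv l (monomial (Finsupp.equivFunOnFinite.symm n) c) =
      if ∀ k, l k ≤ n k then
        monomial (Finsupp.equivFunOnFinite.symm (n - l)) (((∏ k, (n k).choose (l k) : ℕ) : F) * c)
      else 0 := by
  rw [mvHasseDeriv, eval₂_monomial, Finsupp.prod_fintype _ _ fun k => pow_zero _]
  simp only [Finsupp.coe_equivFunOnFinite_symm, C_add_X_pow]
  rw [prod_univ_sum, RingHom.comp_apply, coeff_C_mul, coeff_sum]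
  simp only [coeff_prod_C_mul_X_pow]
  rw [sum_ite_eq', mul_ite, mul_zero]
  have hmem : l ∈ Fintype.piFinset (fun k => range (n k + 1)) ↔ ∀ k, l k ≤ n k := by
    simp [Fintype.mem_piFinset]
  refine if_congr hmem ?_ rfl
  rw [monomial_eq, Finsupp.prod_fintype _ _ fun k => pow_zero _]
  simp only [Finsupp.coe_equivFunOnFinite_symm, Pi.sub_apply, map_mul, map_natCast, map_prod,
    Nat.cast_prod, prod_mul_distrib]
  ring

end HasseDeriv

theorem Finset.Nat.sum_antidiagonalTuple_eq_sum_add {M : Type*} [AddCommMonoid M] {m : ℕ}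
    (l : Fin m → ℕ) (n : ℕ) (g : (Fin m → ℕ) → M) (hg : ∀ i, ¬ (∀ k, l k ≤ i k) → g i = 0) :
    ∑ i ∈ antidiagonalTuple m n, g i =
      if ∑ k, l k ≤ n then ∑ i ∈ antidiagonalTuple m (n - ∑ k, l k), g (l + i) else 0 := by
  split_ifs with hl
  · rw [← sum_image fun i _ j _ h => add_left_cancel h]
    refine (sum_subset (fun i hi => ?_) fun i hi hnot => hg i fun hli => hnot ?_).symm
    · obtain ⟨j, hj, rfl⟩ := mem_image.mp hi
      rw [Nat.mem_antidiagonalTuple] at hj ⊢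
      simp only [Pi.add_apply, sum_add_distrib, hj, Nat.add_sub_cancel' hl]
    · refine mem_image.mpr ⟨i - l, ?_, add_tsub_cancel_of_le (show l ≤ i from hli)⟩
      rw [Nat.mem_antidiagonalTuple] at hi ⊢
      simp only [Pi.sub_apply]
      rw [sum_tsub_distrib _ fun k _ => hli k, hi]
  · refine sum_eq_zero fun i hi => hg i fun hli => hl ?_
    rw [Nat.mem_antidiagonalTuple] at hi
    exact hi ▸ sum_le_sum fun k _ => hli k

/-- **Derivatives of the homogeneous Taylor-coefficient polynomial.**
For `R(X) = ∑_{i' : wt(i') = j'} P^{(i')}(a)·X^{i'}`, the `l`-th Hasse derivative is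
`R^{(l)}(X) = ∑_{i : wt(i) = j' − wt(l)} binom(l+i, l) · P^{(l+i)}(a) · X^i`
(the empty sum, i.e. `0`, when `wt(l) > j'`); in particular
`R^{(l)}(b) = ∑_{i : wt(i) = j' − wt(l)} binom(l+i, l) · P^{(l+i)}(a) · b^i` for all `b`. -/
theorem hasseDeriv_taylor_coefficient_poly {F : Type*} [Field F] {m : ℕ}
    (P : MvPolynomial (Fin m) F) (a : Fin m → F) (j' : ℕ)
    (R : MvPolynomial (Fin m) F)
    (hR : R = ∑ i' ∈ Finset.Nat.antidiagonalTuple m j',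
        MvPolynomial.C (MvPolynomial.eval a (mvHasseDeriv i' P)) *
          MvPolynomial.monomial (Finsupp.equivFunOnFinite.symm i') 1)
    (l : Fin m → ℕ) :
    (mvHasseDeriv l R =
      if (∑ k, l k) ≤ j' then
        ∑ i ∈ Finset.Nat.antidiagonalTuple m (j' - ∑ k, l k),
          MvPolynomial.C (((∏ k, (l k + i k).choose (l k) : ℕ) : F) *
              MvPolynomial.eval a (mvHasseDeriv (l + i) P)) *
            MvPolynomial.monomial (Finsupp.equivFunOnFinite.symm i) 1
      else 0) ∧
    ∀ b : Fin m → F, MvPolynomial.eval b (mvHasseDeriv l R) =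
      if (∑ k, l k) ≤ j' then
        ∑ i ∈ Finset.Nat.antidiagonalTuple m (j' - ∑ k, l k),
          ((∏ k, (l k + i k).choose (l k) : ℕ) : F) *
            MvPolynomial.eval a (mvHasseDeriv (l + i) P) * ∏ k, b k ^ i k
      else 0 := by
  have hD : mvHasseDeriv l R =
      if (∑ k, l k) ≤ j' then
        ∑ i ∈ Finset.Nat.antidiagonalTuple m (j' - ∑ k, l k),
          C (((∏ k, (l k + i k).choose (l k) : ℕ) : F) * eval a (mvHasseDeriv (l + i) P)) *
            monomial (Finsupp.equivFunOnFinite.symm i) 1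
      else 0 := by
    simp only [hR, mvHasseDeriv_sum, C_mul_monomial, mul_one]
    rw [Nat.sum_antidiagonalTuple_eq_sum_add l j' _ fun i hi => by
      rw [mvHasseDeriv_monomial, if_neg hi]]
    refine if_congr Iff.rfl (sum_congr rfl fun i _ => ?_) rfl
    rw [mvHasseDeriv_monomial, if_pos (c := ∀ k, l k ≤ (l + i) k) fun k => Nat.le_add_right _ _,
      add_tsub_cancel_left]
    rfl
  refine ⟨hD, fun b => ?_⟩
  simp only [hD, apply_ite (eval b), map_sum, map_zero, map_mul, eval_C,
    monomial_equivFunOnFinite_symm_one, map_prod, map_pow, eval_X]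
end
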